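/- arXiv:math/0305383 — 2 statements merged into one kernel-verified Lean document; each statement's English description precedes it below -/
import Mathlib

section
/- Let n ≥ 2 and k < n be positive integers and q a prime power. Consider exponent vectors (a_1,...,a_k) with 0 ≤ a_1 < a_2 < ⋯ < a_k < n, representing the integer q^{a_1}+⋯+q^{a_k} modulo q^n−1. If gcd(k,n)=1, then the orbit of each such integer under multiplication by q modulo q^n−1 has exactly n elements. -/
/-!
Write `s = ∑_{e ∈ A} q ^ e` with `A ⊆ {0, …, n-1}`. Since `q ^ n ≡ 1`, multiplying by `q ^ d`
modulo `q ^ n - 1` cyclically shifts the exponent set `A` by `d` modulo `n`; as `A` is a proper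
subset, the shifted sum stays below `q ^ n - 1`, so by uniqueness of base-`q` expansions the
residue determines the shifted set. Summing the elements of the shifted set in `ZMod n`, two
shifts `d, d'` that agree give `k * d = k * d'`, hence `d = d'` because `k` is a unit mod `n`.
-/

open Finset

def cyclicShift (n d : ℕ) (A : Finset ℕ) : Finset ℕ :=
  A.image fun e => (e + d) % n

section cyclicShift

variable {n : ℕ} {A : Finset ℕ}

lemma add_mod_injOn_range (n d : ℕ) : Set.InjOn (fun e => (e + d) % n) (range n) := by
  intro e he e' he' h
  simp only [coe_range, Set.mem_Iio] at he he'
  have := Nat.ModEq.add_right_cancel' d h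
  rwa [Nat.ModEq, Nat.mod_eq_of_lt he, Nat.mod_eq_of_lt he'] at this

lemma cyclicShift_subset_range (hn : 0 < n) (d : ℕ) : cyclicShift n d A ⊆ range n := by
  intro x hx
  obtain ⟨e, -, rfl⟩ := mem_image.mp hx
  exact mem_range.mpr (Nat.mod_lt _ hn)

lemma card_cyclicShift (hA : A ⊆ range n) (d : ℕ) : (cyclicShift n d A).card = A.card :=
  card_image_of_injOn ((add_mod_injOn_range n d).mono (coe_subset.mpr hA))

lemma sum_natCast_cyclicShift (hA : A ⊆ range n) (d : ℕ) :
    ∑ x ∈ cyclicShift n d A, (x : ZMod n) = ∑ x ∈ A, (x : ZMod n) + A.card * d := by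
  rw [cyclicShift, sum_image ((add_mod_injOn_range n d).mono (coe_subset.mpr hA))]
  simp [ZMod.natCast_mod, sum_add_distrib]

lemma cyclicShift_injOn (hA : A ⊆ range n) (hcop : A.card.Coprime n) :
    Set.InjOn (cyclicShift n · A) (range n) := by
  intro d hd d' hd' h
  simp only [coe_range, Set.mem_Iio] at hd hd'
  dsimp only at h
  have hsum := sum_natCast_cyclicShift hA d
  rw [h, sum_natCast_cyclicShift hA d', add_right_inj] at hsum
  have hdd' : (d : ZMod n) = d' :=
    ((ZMod.isUnit_iff_coprime _ _).mpr hcop).mul_left_cancel hsum.symm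
  rwa [ZMod.natCast_eq_natCast_iff', Nat.mod_eq_of_lt hd, Nat.mod_eq_of_lt hd'] at hdd'

end cyclicShift

lemma pow_modEq_pow_mod {q : ℕ} (hq : 0 < q) (m n : ℕ) :
    q ^ m ≡ q ^ (m % n) [MOD q ^ n - 1] := by
  have hqn : q ^ n ≡ 1 [MOD q ^ n - 1] := Nat.modEq_sub (Nat.one_le_pow _ _ hq)
  calc q ^ m = (q ^ n) ^ (m / n) * q ^ (m % n) := by rw [← pow_mul, ← pow_add, Nat.div_add_mod]
    _ ≡ 1 ^ (m / n) * q ^ (m % n) [MOD q ^ n - 1] := (hqn.pow _).mul_right _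
    _ = q ^ (m % n) := by rw [one_pow, one_mul]

section geomSum

variable {q n : ℕ} {A : Finset ℕ}

lemma geomSum_mul_pow_modEq (hq : 0 < q) (hA : A ⊆ range n) (d : ℕ) :
    (∑ e ∈ A, q ^ e) * q ^ d ≡ ∑ e ∈ cyclicShift n d A, q ^ e [MOD q ^ n - 1] := by
  rw [cyclicShift, sum_image ((add_mod_injOn_range n d).mono (coe_subset.mpr hA)), sum_mul]
  exact Nat.ModEq.sum fun e _ => by rw [← pow_add]; exact pow_modEq_pow_mod hq _ _

lemma geomSum_lt_pow_sub_one (hq : 2 ≤ q) (hA : A ⊆ range n) (hcard : A.card < n) :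
    ∑ e ∈ A, q ^ e < q ^ n - 1 := by
  obtain ⟨e₀, he₀, he₀A⟩ : ∃ e₀ ∈ range n, e₀ ∉ A :=
    exists_of_ssubset (hA.ssubset_of_ne (by rintro rfl; simp at hcard))
  have hlt : ∑ e ∈ insert e₀ A, q ^ e < q ^ n :=
    Nat.geomSum_lt hq fun e he => mem_range.mp (insert_subset he₀ hA he)
  rw [sum_insert he₀A] at hlt
  have : 1 ≤ q ^ e₀ := Nat.one_le_pow _ _ (by omega)
  omega

lemma geomSum_mul_pow_mod (hq : 2 ≤ q) (hA : A ⊆ range n) (hcard : A.card < n) (d : ℕ) :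
    (∑ e ∈ A, q ^ e) * q ^ d % (q ^ n - 1) = ∑ e ∈ cyclicShift n d A, q ^ e := by
  rw [geomSum_mul_pow_modEq (by omega) hA d, Nat.mod_eq_of_lt]
  rw [← card_cyclicShift hA d] at hcard
  exact geomSum_lt_pow_sub_one hq (cyclicShift_subset_range (by omega) d) hcard

end geomSum

theorem stmt_13_general (q n k : ℕ) (hq : ∃ p m : ℕ, p.Prime ∧ 0 < m ∧ q = p ^ m)
    (hkn : k < n) (hcop : Nat.Coprime k n)
    (a : Fin k → ℕ) (ha : StrictMono a) (hbound : ∀ i, a i < n) :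
    ((Finset.range n).image
      (fun j => (∑ i, q ^ (a i)) * q ^ j % (q ^ n - 1))).card = n := by
  have hq : 2 ≤ q := by
    obtain ⟨p, m, hp, hm, rfl⟩ := hq
    exact hp.two_le.trans (Nat.le_self_pow hm.ne' p)
  set A := univ.image a
  have hA : A ⊆ range n := by simp [A, subset_iff, hbound]
  have hcard : A.card = k := by simp [A, card_image_of_injective _ ha.injective]
  have hsum : ∑ i, q ^ a i = ∑ e ∈ A, q ^ e := (sum_image fun i _ j _ h => ha.injective h).symm
  rw [card_image_of_injOn, card_range]
  intro j hj j' hj' h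
  simp only [hsum, geomSum_mul_pow_mod hq hA (hcard ▸ hkn)] at h
  exact cyclicShift_injOn hA (hcard ▸ hcop) hj hj' (geomSum_injective hq h)

theorem stmt_13 (q n k : ℕ) (hq : ∃ p m : ℕ, p.Prime ∧ 0 < m ∧ q = p ^ m)
    (hn : 2 ≤ n) (hk : 0 < k) (hkn : k < n) (hcop : Nat.Coprime k n)
    (a : Fin k → ℕ) (ha : StrictMono a) (hbound : ∀ i, a i < n) :
    ((Finset.range n).image
      (fun j => (∑ i, q ^ (a i)) * q ^ j % (q ^ n - 1))).card = n :=
  stmt_13_general q n k hq hkn hcop a ha hbound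
end

section
/- If N is a positive integer with at least 19 distinct prime factors, then N > 2^{(26/7)·(ω(N) + 2.735)}, where ω(N) is the number of distinct prime factors of N. More precisely: N ≥ A_19 · 2^{6.149·(ω(N)−19)} where A_19 is the product of the first 19 primes, and A_19 · 2^{6.149·(ω−19)} > 2^{(26/7)(ω+2.735)} for all ω ≥ 19. -/
/-!
Let `P` be the set of the 19 primes below `71`, whose product is `A19`. Trading each prime of `P`
that does not divide `N` for a prime factor of `N` outside `P` (necessarily `≥ 71`) shows
`N ≥ A19 · 71 ^ (ω(N) - 19)`, and `71 ≥ 2 ^ 6.149`. The last bound holds because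
`A19 > 2 ^ 80.73`, where `80.73 = (26/7) · (19 + 2.735)`, and `26/7 < 6.149`.
-/

/-- The product of the first 19 primes. -/
def A19 : ℕ :=
  2 * 3 * 5 * 7 * 11 * 13 * 17 * 19 * 23 * 29 * 31 * 37 * 41 * 43 * 47 * 53 * 59 * 61 * 67

open Finset

theorem Finset.prod_mul_pow_card_sub_le_prod {α M : Type*} [DecidableEq α] [CommMonoid M]
    [PartialOrder M] [MulLeftMono M] {s t : Finset α} {f : α → M} {b : M}
    (hs : ∀ x ∈ s, f x ≤ b) (ht : ∀ x ∈ t \ s, b ≤ f x) (hst : #s ≤ #t) :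
    (∏ x ∈ s, f x) * b ^ (#t - #s) ≤ ∏ x ∈ t, f x := by
  have hcard : #(s \ t) + (#t - #s) = #(t \ s) := by
    have := card_sdiff_add_card_inter s t
    have := card_sdiff_add_card_inter t s
    rw [inter_comm] at this
    omega
  calc (∏ x ∈ s, f x) * b ^ (#t - #s)
      = (∏ x ∈ s ∩ t, f x) * ((∏ x ∈ s \ t, f x) * b ^ (#t - #s)) := by
        rw [← prod_inter_mul_prod_sdiff s t f, mul_assoc]
    _ ≤ (∏ x ∈ s ∩ t, f x) * b ^ #(t \ s) := by
        rw [← hcard, pow_add]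
        gcongr
        exact prod_le_pow_card _ _ _ fun x hx ↦ hs x (mem_sdiff.mp hx).1
    _ ≤ (∏ x ∈ t ∩ s, f x) * ∏ x ∈ t \ s, f x := by
        rw [inter_comm]
        gcongr
        exact pow_card_le_prod _ _ _ ht
    _ = ∏ x ∈ t, f x := prod_inter_mul_prod_sdiff t s f

theorem card_primesBelow_seventyOne : #(Nat.primesBelow 71) = 19 := by decide

theorem prod_primesBelow_seventyOne : ∏ p ∈ Nat.primesBelow 71, p = A19 := by decide

theorem A19_mul_pow_le_prod_of_prime {s : Finset ℕ} (hs : ∀ p ∈ s, p.Prime) (h : 19 ≤ #s) :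
    A19 * 71 ^ (#s - 19) ≤ ∏ p ∈ s, p := by
  have hbelow : ∀ p ∈ Nat.primesBelow 71, p ≤ 71 := fun p hp ↦ (Nat.lt_of_mem_primesBelow hp).le
  have habove : ∀ p ∈ s \ Nat.primesBelow 71, 71 ≤ p := by
    intro p hp
    rw [mem_sdiff, Nat.mem_primesBelow] at hp
    exact not_lt.mp fun hlt ↦ hp.2 ⟨hlt, hs p hp.1⟩
  have := prod_mul_pow_card_sub_le_prod hbelow habove (card_primesBelow_seventyOne ▸ h)
  rwa [prod_primesBelow_seventyOne, card_primesBelow_seventyOne] at this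

theorem Real.rpow_div_natCast_pow {x : ℝ} (hx : 0 ≤ x) (m : ℕ) {n : ℕ} (hn : n ≠ 0) :
    (x ^ ((m : ℝ) / n)) ^ n = x ^ m := by
  rw [← Real.rpow_natCast, ← Real.rpow_mul hx, div_mul_cancel₀ _ (by positivity),
    Real.rpow_natCast]

theorem two_rpow_le_seventyOne : (2 : ℝ) ^ (6.149 : ℝ) ≤ 71 := by
  have hpow : (2 : ℝ) ^ 6149 ≤ 71 ^ 1000 := by
    exact_mod_cast (by decide +kernel : 2 ^ 6149 ≤ 71 ^ 1000)
  rw [show (6.149 : ℝ) = (6149 : ℕ) / (1000 : ℕ) by norm_num]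
  refine le_of_pow_le_pow_left₀ (n := 1000) (by norm_num) (by norm_num) ?_
  rwa [Real.rpow_div_natCast_pow (by norm_num) _ (by norm_num)]

theorem two_rpow_lt_A19 : (2 : ℝ) ^ (80.73 : ℝ) < A19 := by
  have hpow : (2 : ℝ) ^ 8073 < (A19 : ℝ) ^ 100 := by
    exact_mod_cast (by decide +kernel : 2 ^ 8073 < A19 ^ 100)
  rw [show (80.73 : ℝ) = (8073 : ℕ) / (100 : ℕ) by norm_num]
  refine lt_of_pow_lt_pow_left₀ 100 (by positivity) ?_
  rwa [Real.rpow_div_natCast_pow (by norm_num) _ (by norm_num)]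

theorem A19_mul_two_rpow_le {N : ℕ} (hN : 0 < N) (h : 19 ≤ #N.primeFactors) :
    (A19 : ℝ) * 2 ^ ((6.149 : ℝ) * ((#N.primeFactors : ℝ) - 19)) ≤ N := by
  have hexcess : (#N.primeFactors : ℝ) - 19 = ((#N.primeFactors - 19 : ℕ) : ℝ) := by
    push_cast [h]; ring
  calc (A19 : ℝ) * 2 ^ ((6.149 : ℝ) * ((#N.primeFactors : ℝ) - 19))
      = A19 * (2 ^ (6.149 : ℝ)) ^ (#N.primeFactors - 19) := by
        rw [hexcess, Real.rpow_mul_natCast zero_le_two]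
    _ ≤ A19 * 71 ^ (#N.primeFactors - 19) := by gcongr; exact two_rpow_le_seventyOne
    _ ≤ ∏ p ∈ N.primeFactors, p := by
        exact_mod_cast A19_mul_pow_le_prod_of_prime (fun p ↦ Nat.prime_of_mem_primeFactors) h
    _ ≤ N := by exact_mod_cast Nat.le_of_dvd hN (Nat.prod_primeFactors_dvd N)

theorem two_rpow_lt_A19_mul_two_rpow {ω : ℝ} (hω : 19 ≤ ω) :
    (2 : ℝ) ^ ((26 / 7 : ℝ) * (ω + 2.735)) < A19 * 2 ^ ((6.149 : ℝ) * (ω - 19)) := by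
  calc (2 : ℝ) ^ ((26 / 7 : ℝ) * (ω + 2.735))
      = 2 ^ (80.73 : ℝ) * 2 ^ ((26 / 7 : ℝ) * (ω - 19)) := by
        rw [← Real.rpow_add two_pos]; ring_nf
    _ < A19 * 2 ^ ((26 / 7 : ℝ) * (ω - 19)) := by gcongr; exact two_rpow_lt_A19
    _ ≤ A19 * 2 ^ ((6.149 : ℝ) * (ω - 19)) := by
        gcongr
        · norm_num
        · linarith

theorem stmt_18 (N : ℕ) (hN : 0 < N) (h : 19 ≤ N.primeFactors.card) :
    (N : ℝ) > (2 : ℝ) ^ ((26 / 7 : ℝ) * ((N.primeFactors.card : ℝ) + 2.735)) ∧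
    (N : ℝ) ≥ (A19 : ℝ) * (2 : ℝ) ^ ((6.149 : ℝ) * ((N.primeFactors.card : ℝ) - 19)) ∧
    ∀ ω : ℕ, 19 ≤ ω →
      (A19 : ℝ) * (2 : ℝ) ^ ((6.149 : ℝ) * ((ω : ℝ) - 19)) >
        (2 : ℝ) ^ ((26 / 7 : ℝ) * ((ω : ℝ) + 2.735)) := by
  have hlower := A19_mul_two_rpow_le hN h
  have hgap : ∀ ω : ℕ, 19 ≤ ω → (2 : ℝ) ^ ((26 / 7 : ℝ) * ((ω : ℝ) + 2.735)) <
      A19 * 2 ^ ((6.149 : ℝ) * ((ω : ℝ) - 19)) :=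
    fun ω hω ↦ two_rpow_lt_A19_mul_two_rpow (by exact_mod_cast hω)
  exact ⟨(hgap _ h).trans_le hlower, hlower, hgap⟩
end
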